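/- arXiv:1908.11840 — 4 statements merged into one kernel-verified Lean document; each statement's English description precedes it below -/
import Mathlib

section
/- Let d ∈ ℕ, m ≥ 0, real numbers λ₁ > λ₂ > … > λ_d > 0, and K > 0. Then there exists a constant C > 0, depending only on d, m, λ₁,…,λ_d and K, such that the following holds: for every ε ∈ (0,1] and every 0 ≤ r ≤ T with ε·e^{2λ₁T} ≤ 1, if a¹,…,a^d : [r,T] → ℝ are nonnegative continuous functions satisfying a^i(t) ≤ K·(ε^m e^{−2λ_i r} + ε² Σ_{k=1}^d ∫_r^t e^{2(λ_k−λ_i)s} a^k(s) ds) for all t ∈ [r,T] and all i = 1,…,d, then a^i(t) ≤ C·ε^m e^{−2λ_d r} for all t ∈ [r,T] and all i = 1,…,d. -/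
open Real MeasureTheory

/-!
Put `B(s) = ∑ₖ e^{2λₖ s} aₖ(s)`. Since `s ≥ r ≥ 0`, the integral term of the `i`-th inequality
is at most `e^{-2λᵢ r} ∫ᵣᵗ B`, so `aᵢ(t) ≤ K e^{-2λᵢ r} (εᵐ + ε² ∫ᵣᵗ B)`. Multiplying by
`e^{2λᵢ t}` and using `e^{2λᵢ (t - r)} ≤ e^{2λ₁ T} ≤ ε⁻¹` gives the scalar inequality
`ε² B(t) ≤ d K ε (εᵐ + ε² ∫ᵣᵗ B)`, hence by Gronwall `εᵐ + ε² ∫ᵣᵗ B ≤ εᵐ e^{d K ε (t - r)}`.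
Finally `2λ₁ T ≤ e^{2λ₁ T} ≤ ε⁻¹` bounds the exponent by `d K / (2λ₁)`, uniformly in `ε`, `T`, `r`.
-/

open Set

theorem add_integral_le_mul_exp_of_le_mul_add_integral {u : ℝ → ℝ} {α β r T : ℝ}
    (hu : ContinuousOn u (Icc r T)) (h : ∀ t ∈ Icc r T, u t ≤ β * (α + ∫ s in r..t, u s)) :
    ∀ t ∈ Icc r T, α + ∫ s in r..t, u s ≤ α * exp (β * (t - r)) := by
  intro t ht
  have hrT : r ≤ T := ht.1.trans ht.2
  set v := IccExtend hrT ((Icc r T).domRestrict u)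
  have hv : Continuous v := hu.domRestrict.Icc_extend'
  have hvu : EqOn v u (Icc r T) := fun s hs => IccExtend_of_mem _ _ hs
  have hint : ∀ t ∈ Icc r T, ∫ s in r..t, v s = ∫ s in r..t, u s := fun t ht =>
    intervalIntegral.integral_congr (hvu.mono (uIcc_of_le ht.1 ▸ Icc_subset_Icc_right ht.2))
  have hG : ∀ x ∈ Icc r T, α + ∫ s in r..x, v s ≤ gronwallBound α β 0 (x - r) := by
    refine le_gronwallBound_of_liminf_deriv_right_le (f' := v) (by fun_prop)
      (fun x _ _ hlt => (((hv.integral_hasStrictDerivAt r x).hasDerivAt.const_add α)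
        |>.hasDerivWithinAt.liminf_right_slope_le hlt))
      (by simp) fun x hx => ?_
    rw [add_zero, hvu ⟨hx.1, hx.2.le⟩, hint x ⟨hx.1, hx.2.le⟩]
    exact h x ⟨hx.1, hx.2.le⟩
  simpa only [hint t ht, gronwallBound_ε0] using hG t ht

theorem integral_exp_sub_mul_le {f : ℝ → ℝ} {μ ν r t : ℝ} (hν : 0 ≤ ν) (hrt : r ≤ t)
    (hf : IntervalIntegrable f volume r t) (hf₀ : ∀ s ∈ Icc r t, 0 ≤ f s) :
    ∫ s in r..t, exp (2 * (μ - ν) * s) * f s ≤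
      exp (-(2 * ν) * r) * ∫ s in r..t, exp (2 * μ * s) * f s := by
  rw [← intervalIntegral.integral_const_mul]
  refine intervalIntegral.integral_mono_on hrt (hf.continuousOn_mul (by fun_prop))
    ((hf.continuousOn_mul (by fun_prop)).const_mul _) fun s hs => ?_
  rw [show 2 * (μ - ν) * s = -(2 * ν) * s + 2 * μ * s by ring, exp_add, mul_assoc]
  exact mul_le_mul_of_nonneg_right (exp_le_exp.2 (by nlinarith [hs.1]))
    (mul_nonneg (exp_nonneg _) (hf₀ s hs))

theorem sum_integral_exp_sub_mul_le {ι : Type*} [Fintype ι] {lam : ι → ℝ} {a : ι → ℝ → ℝ}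
    {i : ι} {r t : ℝ} (hi : 0 ≤ lam i) (hrt : r ≤ t)
    (ha : ∀ k, IntervalIntegrable (a k) volume r t) (ha₀ : ∀ k, ∀ s ∈ Icc r t, 0 ≤ a k s) :
    ∑ k, ∫ s in r..t, exp (2 * (lam k - lam i) * s) * a k s ≤
      exp (-(2 * lam i) * r) * ∫ s in r..t, ∑ k, exp (2 * lam k * s) * a k s := by
  rw [intervalIntegral.integral_finsetSum fun k _ => (ha k).continuousOn_mul (by fun_prop),
    Finset.mul_sum]
  exact Finset.sum_le_sum fun k _ => integral_exp_sub_mul_le hi hrt (ha k) (ha₀ k)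

theorem sum_exp_mul_le_card_mul {ι : Type*} [Fintype ι] {lam a : ι → ℝ} {c r t M : ℝ}
    (hc : 0 ≤ c) (ha : ∀ i, a i ≤ exp (-(2 * lam i) * r) * c)
    (hM : ∀ i, exp (2 * lam i * (t - r)) ≤ M) :
    ∑ i, exp (2 * lam i * t) * a i ≤ Fintype.card ι * M * c := by
  calc ∑ i, exp (2 * lam i * t) * a i ≤ ∑ i, exp (2 * lam i * (t - r)) * c := by
        refine Finset.sum_le_sum fun i _ =>
          (mul_le_mul_of_nonneg_left (ha i) (exp_nonneg _)).trans_eq ?_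
        rw [← mul_assoc, ← exp_add]
        ring_nf
    _ ≤ ∑ _i : ι, M * c := by gcongr with i; exact hM i
    _ = Fintype.card ι * M * c := by
        rw [Finset.sum_const, Finset.card_univ, nsmul_eq_mul, mul_assoc]

section IntegralSystem

variable {ι : Type*} [Fintype ι] {lam : ι → ℝ} {a : ι → ℝ → ℝ} {K ε m r T : ℝ}

noncomputable def expWeightedSum (lam : ι → ℝ) (a : ι → ℝ → ℝ) (s : ℝ) : ℝ :=
  ∑ k, exp (2 * lam k * s) * a k s

theorem continuousOn_expWeightedSum (hcont : ∀ k, ContinuousOn (a k) (Icc r T)) :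
    ContinuousOn (expWeightedSum lam a) (Icc r T) :=
  continuousOn_finsetSum _ fun k _ =>
    (continuous_exp.comp (by fun_prop)).continuousOn.mul (hcont k)

theorem le_exp_mul_of_le_integral_system (hlam : ∀ i, 0 ≤ lam i) (hK : 0 ≤ K)
    (hcont : ∀ k, ContinuousOn (a k) (Icc r T)) (ha₀ : ∀ k, ∀ t ∈ Icc r T, 0 ≤ a k t)
    (hsys : ∀ i, ∀ t ∈ Icc r T, a i t ≤
      K * (ε ^ m * exp (-(2 * lam i) * r) +
        ε ^ 2 * ∑ k, ∫ s in r..t, exp (2 * (lam k - lam i) * s) * a k s))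
    (i : ι) {t : ℝ} (ht : t ∈ Icc r T) :
    a i t ≤ exp (-(2 * lam i) * r) *
      (K * (ε ^ m + ∫ s in r..t, ε ^ 2 * expWeightedSum lam a s)) := by
  have hsum := sum_integral_exp_sub_mul_le (hlam i) ht.1
    (fun k => ((hcont k).mono (Icc_subset_Icc_right ht.2)).intervalIntegrable_of_Icc ht.1)
    fun k s hs => ha₀ k s ⟨hs.1, hs.2.trans ht.2⟩
  calc a i t ≤ _ := hsys i t ht
    _ ≤ K * (ε ^ m * exp (-(2 * lam i) * r) + ε ^ 2 * (exp (-(2 * lam i) * r) *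
          ∫ s in r..t, expWeightedSum lam a s)) := by unfold expWeightedSum; gcongr
    _ = _ := by rw [intervalIntegral.integral_const_mul]; ring

theorem sq_mul_expWeightedSum_le (hε : 0 < ε) (hr : 0 ≤ r) (hlam : ∀ i, 0 ≤ lam i)
    (hK : 0 ≤ K) (hεT : ∀ i, ε * exp (2 * lam i * T) ≤ 1)
    (hcont : ∀ k, ContinuousOn (a k) (Icc r T)) (ha₀ : ∀ k, ∀ t ∈ Icc r T, 0 ≤ a k t)
    (hsys : ∀ i, ∀ t ∈ Icc r T, a i t ≤
      K * (ε ^ m * exp (-(2 * lam i) * r) +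
        ε ^ 2 * ∑ k, ∫ s in r..t, exp (2 * (lam k - lam i) * s) * a k s))
    {t : ℝ} (ht : t ∈ Icc r T) :
    ε ^ 2 * expWeightedSum lam a t ≤
      Fintype.card ι * K * ε * (ε ^ m + ∫ s in r..t, ε ^ 2 * expWeightedSum lam a s) := by
  have hG : 0 ≤ ε ^ m + ∫ s in r..t, ε ^ 2 * expWeightedSum lam a s :=
    add_nonneg (rpow_nonneg hε.le m) (intervalIntegral.integral_nonneg ht.1 fun s hs =>
      mul_nonneg (sq_nonneg ε) (Finset.sum_nonneg fun k _ =>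
        mul_nonneg (exp_nonneg _) (ha₀ k s ⟨hs.1, hs.2.trans ht.2⟩)))
  have hexp : ∀ i, exp (2 * lam i * (t - r)) ≤ ε⁻¹ := fun i => by
    rw [← one_div, le_div_iff₀ hε, mul_comm]
    refine (mul_le_mul_of_nonneg_left (exp_le_exp.2 ?_) hε.le).trans (hεT i)
    nlinarith [hlam i, ht.2]
  calc ε ^ 2 * expWeightedSum lam a t
      ≤ ε ^ 2 * (Fintype.card ι * ε⁻¹ *
          (K * (ε ^ m + ∫ s in r..t, ε ^ 2 * expWeightedSum lam a s))) :=
        mul_le_mul_of_nonneg_left (sum_exp_mul_le_card_mul (mul_nonneg hK hG)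
          (fun i => le_exp_mul_of_le_integral_system hlam hK hcont ha₀ hsys i ht) hexp)
          (sq_nonneg ε)
    _ = _ := by field_simp

end IntegralSystem

/-- Here `lam 0 = λ₁ > lam 1 = λ₂ > … > lam (Fin.last n) = λ_d > 0` with `d = n + 1`. -/
theorem long_exit_gronwall_system_general (n : ℕ) (m : ℝ)
    (lam : Fin (n + 1) → ℝ) (hanti : StrictAnti lam) (hpos : ∀ i, 0 < lam i)
    (K : ℝ) (hK : 0 < K) :
    ∃ C > 0, ∀ ε : ℝ, 0 < ε → ε ≤ 1 → ∀ r T : ℝ, 0 ≤ r → r ≤ T →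
      ε * Real.exp (2 * lam 0 * T) ≤ 1 →
      ∀ a : Fin (n + 1) → ℝ → ℝ,
        (∀ i, ContinuousOn (a i) (Set.Icc r T)) →
        (∀ i, ∀ t ∈ Set.Icc r T, 0 ≤ a i t) →
        (∀ i, ∀ t ∈ Set.Icc r T, a i t ≤
          K * (ε ^ m * Real.exp (-(2 * lam i) * r) +
            ε ^ 2 * ∑ k, ∫ s in r..t, Real.exp (2 * (lam k - lam i) * s) * a k s)) →
        ∀ i, ∀ t ∈ Set.Icc r T,
          a i t ≤ C * ε ^ m * Real.exp (-(2 * lam (Fin.last n)) * r) := by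
  set D : ℝ := Fintype.card (Fin (n + 1)) * K
  refine ⟨K * exp (D / (2 * lam 0)), by positivity, ?_⟩
  intro ε hε _ r T hr hrT hsmall a hcont ha₀ hsys i t ht
  have hlam : ∀ i, 0 ≤ lam i := fun i => (hpos i).le
  have hsmall_i : ∀ i, ε * exp (2 * lam i * T) ≤ 1 := fun i =>
    (mul_le_mul_of_nonneg_left (exp_le_exp.2 (by
      nlinarith [hanti.antitone (Fin.zero_le i), hr.trans hrT])) hε.le).trans hsmall
  have hG := add_integral_le_mul_exp_of_le_mul_add_integral
    (continuousOn_const.mul (continuousOn_expWeightedSum hcont))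
    (fun t ht => sq_mul_expWeightedSum_le hε hr hlam hK.le hsmall_i hcont ha₀ hsys ht) t ht
  have hεt : ε * (t - r) * (2 * lam 0) ≤ 1 := by
    have := (mul_le_mul_of_nonneg_left (add_one_le_exp (2 * lam 0 * T)) hε.le).trans hsmall
    nlinarith [mul_nonneg (mul_nonneg hε.le (hpos 0).le) (by linarith [ht.2] : 0 ≤ T - (t - r))]
  have hexponent : D * ε * (t - r) ≤ D / (2 * lam 0) := by
    rw [le_div_iff₀ (by linarith [hpos 0])]
    nlinarith [mul_le_mul_of_nonneg_left hεt (by positivity : (0 : ℝ) ≤ D)]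
  calc a i t ≤ exp (-(2 * lam i) * r) *
        (K * (ε ^ m + ∫ s in r..t, ε ^ 2 * expWeightedSum lam a s)) :=
        le_exp_mul_of_le_integral_system hlam hK.le hcont ha₀ hsys i ht
    _ ≤ exp (-(2 * lam (Fin.last n)) * r) * (K * (ε ^ m * exp (D / (2 * lam 0)))) := by
        refine mul_le_mul_of_nonneg (exp_le_exp.2 ?_) (mul_le_mul_of_nonneg_left
          (hG.trans (by gcongr)) hK.le) (exp_nonneg _) (by positivity)
        nlinarith [hanti.antitone (Fin.le_last i)]
    _ = _ := by ring

/-- Gronwall-type estimate for a system of integral inequalities (Lemma 5.1).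
Here `lam 0 = λ₁ > lam 1 = λ₂ > … > lam (Fin.last n) = λ_d > 0` with `d = n + 1`. -/
theorem long_exit_gronwall_system (n : ℕ) (m : ℝ) (hm : 0 ≤ m)
    (lam : Fin (n + 1) → ℝ) (hanti : StrictAnti lam) (hpos : ∀ i, 0 < lam i)
    (K : ℝ) (hK : 0 < K) :
    ∃ C > 0, ∀ ε : ℝ, 0 < ε → ε ≤ 1 → ∀ r T : ℝ, 0 ≤ r → r ≤ T →
      ε * Real.exp (2 * lam 0 * T) ≤ 1 →
      ∀ a : Fin (n + 1) → ℝ → ℝ,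
        (∀ i, ContinuousOn (a i) (Set.Icc r T)) →
        (∀ i, ∀ t ∈ Set.Icc r T, 0 ≤ a i t) →
        (∀ i, ∀ t ∈ Set.Icc r T, a i t ≤
          K * (ε ^ m * Real.exp (-(2 * lam i) * r) +
            ε ^ 2 * ∑ k, ∫ s in r..t, Real.exp (2 * (lam k - lam i) * s) * a k s)) →
        ∀ i, ∀ t ∈ Set.Icc r T,
          a i t ≤ C * ε ^ m * Real.exp (-(2 * lam (Fin.last n)) * r) :=
  long_exit_gronwall_system_general n m lam hanti hpos K hK
end

section
/- Let (Ω, F, P) be a probability space, d ∈ ℕ, and let A : Ω → (d×d real matrices) be measurable such that A(ω) is symmetric positive semidefinite almost surely. Let ν(ω) denote the smallest eigenvalue of A(ω). Then for each p ≥ 1 there is a constant C_{p,d} > 0, depending only on p and d, such that for all ζ ≥ 0: P(ν ≤ ζ) ≤ C_{p,d}·( sup_{v ∈ ℝ^d, |v|=1} E[ ⟨v, A v⟩^{−(p+2d)} ] + E[ (Σ_{i,j=1}^d |A^{ij}|²)^{p/2} ] )·ζ^p, provided both expectations on the right-hand side are finite (with ⟨v, A v⟩ > 0 a.s. for every unit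 vector v). -/
/-!
If `ν ω ≤ ζ`, a unit eigenvector `u` of `A ω` has `⟨u, A ω u⟩ ≤ ζ`. Off the event that the
Frobenius norm of `A ω` exceeds `ζ⁻¹`, which has probability at most `ζ ^ p E |A|_F ^ p` by
Markov's inequality, moving `u` by `ζ²` changes the quadratic form by at most `2ζ`. So some
point `w` of a `ζ²`-net of the unit sphere with `O(ζ ^ (-2d))` points has `⟨w, A ω w⟩ ≤ 3ζ`;
the net is made of the normalised integer points of the cube `[-K, K]^d`, `K = ⌈d / ζ²⌉`.
Markov's inequality for `⟨w, A w⟩ ^ (-(p + 2d))` bounds each of these events by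
`(3ζ) ^ (p + 2d)` times the supremum of the negative moments, and the union bound over the net
leaves the factor `ζ ^ p`. For `ζ ≥ 1` the bound is trivial because the two moments add up to
at least `1`, and `ζ = 0` is the limit `ζ → 0`.
-/

open MeasureTheory Matrix

theorem norm_inv_norm_smul_sub_le {E : Type*} [NormedAddCommGroup E] [NormedSpace ℝ E] {u : E}
    (hu : ‖u‖ = 1) (x : E) : ‖‖x‖⁻¹ • x - u‖ ≤ 2 * ‖x - u‖ := by
  have hx : ‖‖x‖⁻¹ • x - x‖ ≤ ‖x - u‖ := by
    rcases eq_or_ne x 0 with rfl | hx0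
    · simp
    have hpos : 0 < ‖x‖ := norm_pos_iff.2 hx0
    have hsmul : ‖x‖⁻¹ • x - x = (‖x‖⁻¹ - 1) • x := by rw [sub_smul, one_smul]
    calc ‖‖x‖⁻¹ • x - x‖ = |(‖x‖⁻¹ - 1) * ‖x‖| := by
          rw [hsmul, norm_smul, Real.norm_eq_abs, abs_mul, abs_norm]
      _ = |‖x‖ - ‖u‖| := by rw [sub_mul, inv_mul_cancel₀ hpos.ne', one_mul, hu, abs_sub_comm]
      _ ≤ ‖x - u‖ := abs_norm_sub_norm_le x u
  calc ‖‖x‖⁻¹ • x - u‖ ≤ ‖‖x‖⁻¹ • x - x‖ + ‖x - u‖ := norm_sub_le_norm_sub_add_norm_sub _ _ _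
    _ ≤ 2 * ‖x - u‖ := by linarith

section Deterministic

variable {ι : Type*} [Fintype ι]

theorem sq_dotProduct_mulVec_le (M : Matrix ι ι ℝ) (v w : ι → ℝ) :
    (v ⬝ᵥ M *ᵥ w) ^ 2 ≤ (∑ i, v i ^ 2) * (∑ i, ∑ j, M i j ^ 2) * ∑ i, w i ^ 2 := by
  have hMw : ∑ i, (M *ᵥ w) i ^ 2 ≤ (∑ i, ∑ j, M i j ^ 2) * ∑ i, w i ^ 2 := by
    rw [Finset.sum_mul]
    exact Finset.sum_le_sum fun i _ => Finset.sum_mul_sq_le_sq_mul_sq _ (M i) w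
  calc (v ⬝ᵥ M *ᵥ w) ^ 2 ≤ (∑ i, v i ^ 2) * ∑ i, (M *ᵥ w) i ^ 2 :=
        Finset.sum_mul_sq_le_sq_mul_sq _ v (M *ᵥ w)
    _ ≤ (∑ i, v i ^ 2) * ((∑ i, ∑ j, M i j ^ 2) * ∑ i, w i ^ 2) := by gcongr
    _ = _ := by ring

theorem dotProduct_mulVec_le_mul {M : Matrix ι ι ℝ} {v w : ι → ℝ} {a b c : ℝ}
    (hv : ∑ i, v i ^ 2 ≤ a ^ 2) (hM : ∑ i, ∑ j, M i j ^ 2 ≤ b ^ 2) (hw : ∑ i, w i ^ 2 ≤ c ^ 2)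
    (ha : 0 ≤ a) (hb : 0 ≤ b) (hc : 0 ≤ c) :
    v ⬝ᵥ M *ᵥ w ≤ a * b * c := by
  refine le_of_sq_le_sq ((sq_dotProduct_mulVec_le M v w).trans ?_) (by positivity)
  rw [mul_pow, mul_pow]
  gcongr

theorem dotProduct_mulVec_self_le_add {M : Matrix ι ι ℝ} {u w : ι → ℝ} {δ ε : ℝ}
    (hu : ∑ i, u i ^ 2 = 1) (hw : ∑ i, w i ^ 2 = 1) (hδ : ∑ i, (w i - u i) ^ 2 ≤ δ ^ 2)
    (hM : ∑ i, ∑ j, M i j ^ 2 ≤ ε ^ 2) (hδ0 : 0 ≤ δ) (hε0 : 0 ≤ ε) :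
    w ⬝ᵥ M *ᵥ w ≤ u ⬝ᵥ M *ᵥ u + 2 * (δ * ε) := by
  have hD : ∑ i, (w - u) i ^ 2 ≤ δ ^ 2 := by simpa only [Pi.sub_apply] using hδ
  have h1 : (w - u) ⬝ᵥ M *ᵥ w ≤ δ * ε * 1 :=
    dotProduct_mulVec_le_mul hD hM (by rw [hw, one_pow]) hδ0 hε0 zero_le_one
  have h2 : u ⬝ᵥ M *ᵥ (w - u) ≤ 1 * ε * δ :=
    dotProduct_mulVec_le_mul (by rw [hu, one_pow]) hM hD zero_le_one hε0 hδ0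
  have hsplit : w ⬝ᵥ M *ᵥ w =
      u ⬝ᵥ M *ᵥ u + ((w - u) ⬝ᵥ M *ᵥ w + u ⬝ᵥ M *ᵥ (w - u)) := by
    simp only [sub_dotProduct, mulVec_sub, dotProduct_sub]
    ring
  linarith

noncomputable def unitize (v : ι → ℝ) : ι → ℝ :=
  ‖(WithLp.toLp 2 v : EuclideanSpace ℝ ι)‖⁻¹ • v

theorem sum_sq_eq_norm_toLp_sq (v : ι → ℝ) :
    ∑ i, v i ^ 2 = ‖(WithLp.toLp 2 v : EuclideanSpace ℝ ι)‖ ^ 2 := by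
  simp [EuclideanSpace.real_norm_sq_eq]

theorem sum_sq_unitize {v : ι → ℝ} (hv : v ≠ 0) : ∑ i, unitize v i ^ 2 = 1 := by
  have hv' : (WithLp.toLp 2 v : EuclideanSpace ℝ ι) ≠ 0 := by simpa using hv
  rw [sum_sq_eq_norm_toLp_sq, unitize, WithLp.toLp_smul, norm_smul, norm_inv, norm_norm,
    inv_mul_cancel₀ (norm_ne_zero_iff.2 hv'), one_pow]

theorem dotProduct_mulVec_unitize (M : Matrix ι ι ℝ) (v : ι → ℝ) :
    unitize v ⬝ᵥ M *ᵥ unitize v = (∑ i, v i ^ 2)⁻¹ * (v ⬝ᵥ M *ᵥ v) := by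
  rw [unitize, mulVec_smul, smul_dotProduct, dotProduct_smul, sum_sq_eq_norm_toLp_sq]
  simp only [smul_eq_mul]
  ring

theorem exists_sum_sq_eq_one_dotProduct_mulVec_eq [DecidableEq ι] {M : Matrix ι ι ℝ} {t : ℝ}
    (ht : t ∈ spectrum ℝ M) : ∃ u : ι → ℝ, ∑ i, u i ^ 2 = 1 ∧ u ⬝ᵥ M *ᵥ u = t := by
  rw [← spectrum_toLin', ← Module.End.hasEigenvalue_iff_mem_spectrum] at ht
  obtain ⟨w, hw⟩ := ht.exists_hasEigenvector
  have hMw : M *ᵥ w = t • w := by simpa using hw.apply_eq_smul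
  have hw0 : ∑ i, w i ^ 2 ≠ 0 := by
    rw [sum_sq_eq_norm_toLp_sq]; simpa using hw.2
  refine ⟨unitize w, sum_sq_unitize hw.2, ?_⟩
  have hww : w ⬝ᵥ w = ∑ i, w i ^ 2 := by simp only [dotProduct, sq]
  rw [dotProduct_mulVec_unitize, hMw, dotProduct_smul, smul_eq_mul, hww]
  field_simp

theorem unitize_smul {c : ℝ} (hc : 0 < c) (v : ι → ℝ) : unitize (c • v) = unitize v := by
  rw [unitize, unitize, WithLp.toLp_smul, norm_smul, Real.norm_of_nonneg hc.le, smul_smul]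
  congr 1
  field_simp

theorem sum_sq_unitize_sub_le {u : ι → ℝ} (hu : ∑ i, u i ^ 2 = 1) (v : ι → ℝ) :
    ∑ i, (unitize v i - u i) ^ 2 ≤ 4 * ∑ i, (v i - u i) ^ 2 := by
  have hu' : ‖(WithLp.toLp 2 u : EuclideanSpace ℝ ι)‖ = 1 := by
    rw [sum_sq_eq_norm_toLp_sq] at hu
    exact (pow_eq_one_iff_of_nonneg (norm_nonneg _) two_ne_zero).1 hu
  have key := norm_inv_norm_smul_sub_le hu' (WithLp.toLp 2 v)
  calc ∑ i, (unitize v i - u i) ^ 2 = ∑ i, (unitize v - u) i ^ 2 := rfl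
    _ = ‖‖WithLp.toLp 2 v‖⁻¹ • WithLp.toLp 2 v - WithLp.toLp 2 u‖ ^ 2 := by
        rw [sum_sq_eq_norm_toLp_sq, WithLp.toLp_sub, unitize, WithLp.toLp_smul]
    _ ≤ (2 * ‖(WithLp.toLp 2 v : EuclideanSpace ℝ ι) - WithLp.toLp 2 u‖) ^ 2 := by gcongr
    _ = 4 * ∑ i, (v - u) i ^ 2 := by rw [sum_sq_eq_norm_toLp_sq, WithLp.toLp_sub]; ring
    _ = 4 * ∑ i, (v i - u i) ^ 2 := rfl

-- `unitize 0 = 0` is not a unit vector, so `subtype` drops the origin.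
open Classical in
noncomputable def unitGrid (ι : Type*) [Fintype ι] (K : ℕ) :
    Finset {v : ι → ℝ // ∑ i, v i ^ 2 = 1} :=
  ((Fintype.piFinset fun _ : ι => Finset.Icc (-(K : ℤ)) K).image
    fun x => unitize fun i => (x i : ℝ)).subtype _

theorem card_unitGrid_le (K : ℕ) : (unitGrid ι K).card ≤ (2 * K + 1) ^ Fintype.card ι := by
  classical
  calc (unitGrid ι K).card ≤ (Fintype.piFinset fun _ : ι => Finset.Icc (-(K : ℤ)) K).card := by
        rw [unitGrid, Finset.card_subtype]
        exact (Finset.card_filter_le _ _).trans Finset.card_image_le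
    _ = (2 * K + 1) ^ Fintype.card ι := by
        rw [Fintype.card_piFinset, Finset.prod_const, Int.card_Icc, Finset.card_univ]
        congr 1
        omega

theorem mem_unitGrid_of_abs_le {x : ι → ℤ} {K : ℕ} (hx : ∀ i, |x i| ≤ K)
    (hx0 : (fun i => (x i : ℝ)) ≠ 0) :
    (⟨unitize fun i => (x i : ℝ), sum_sq_unitize hx0⟩ : {v : ι → ℝ // ∑ i, v i ^ 2 = 1}) ∈
      unitGrid ι K := by
  classical
  rw [unitGrid, Finset.mem_subtype]
  exact Finset.mem_image_of_mem _
    (Fintype.mem_piFinset.2 fun i => Finset.mem_Icc.2 (abs_le.1 (hx i)))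

theorem abs_round_natCast_mul_le {a : ℝ} (ha : |a| ≤ 1) (K : ℕ) : |round (K * a)| ≤ K := by
  have hround := abs_sub_round ((K : ℝ) * a)
  have htri := abs_sub_abs_le_abs_sub (round ((K : ℝ) * a) : ℝ) ((K : ℝ) * a)
  rw [abs_sub_comm] at hround
  have hKa : |(K : ℝ) * a| ≤ K := by
    rw [abs_mul, Nat.abs_cast]
    exact mul_le_of_le_one_right (Nat.cast_nonneg K) ha
  have : |(round ((K : ℝ) * a) : ℝ)| < K + 1 := by linarith
  exact Int.lt_add_one_iff.1 (by exact_mod_cast this)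

theorem exists_mem_unitGrid_sum_sq_sub_le {u : ι → ℝ} (hu : ∑ i, u i ^ 2 = 1) {K : ℕ}
    (hK : (Fintype.card ι : ℝ) < 4 * K ^ 2) :
    ∃ w ∈ unitGrid ι K, ∑ i, ((w : ι → ℝ) i - u i) ^ 2 ≤ Fintype.card ι / K ^ 2 := by
  have hK0 : (0 : ℝ) < K :=
    Nat.cast_pos.2 (Nat.pos_of_ne_zero fun h => absurd hK (by simp [h]))
  set x : ι → ℤ := fun i => round (K * u i)
  set y : ι → ℝ := fun i => (x i : ℝ)
  have hround : ∀ i, |y i - K * u i| ≤ 1 / 2 := fun i => by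
    simpa [y, x, abs_sub_comm] using abs_sub_round ((K : ℝ) * u i)
  have hxK : ∀ i, |x i| ≤ K := fun i => abs_round_natCast_mul_le ((sq_le_one_iff_abs_le_one _).1
    (hu ▸ Finset.single_le_sum (fun j _ => sq_nonneg (u j)) (Finset.mem_univ i))) K
  have hclose : ∑ i, (((K : ℝ)⁻¹ • y) i - u i) ^ 2 ≤ Fintype.card ι / (4 * K ^ 2) := by
    have hterm : ∀ i, (((K : ℝ)⁻¹ • y) i - u i) ^ 2 ≤ 1 / (4 * K ^ 2) := fun i => by
      have hsq : (y i - K * u i) ^ 2 ≤ (1 / 2) ^ 2 :=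
        sq_le_sq' (abs_le.1 (hround i)).1 (abs_le.1 (hround i)).2
      have : ((K : ℝ)⁻¹ • y) i - u i = (y i - K * u i) / K := by
        rw [Pi.smul_apply, smul_eq_mul]; field_simp
      rw [this, div_pow, div_le_div_iff₀ (by positivity) (by positivity)]
      nlinarith
    calc ∑ i, (((K : ℝ)⁻¹ • y) i - u i) ^ 2 ≤ ∑ _i : ι, 1 / (4 * (K : ℝ) ^ 2) :=
          Finset.sum_le_sum fun i _ => hterm i
      _ = Fintype.card ι / (4 * K ^ 2) := by simp [div_eq_mul_inv]
  have hy0 : y ≠ 0 := by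
    intro h
    have h1 : ∑ i, (((K : ℝ)⁻¹ • y) i - u i) ^ 2 = 1 := by simp [h, hu]
    have h2 : (Fintype.card ι : ℝ) / (4 * K ^ 2) < 1 := (div_lt_one (by positivity)).2 hK
    linarith
  refine ⟨_, mem_unitGrid_of_abs_le hxK hy0, ?_⟩
  calc ∑ i, (unitize y i - u i) ^ 2 = ∑ i, (unitize ((K : ℝ)⁻¹ • y) i - u i) ^ 2 := by
        rw [unitize_smul (inv_pos.2 hK0)]
    _ ≤ 4 * ∑ i, (((K : ℝ)⁻¹ • y) i - u i) ^ 2 := sum_sq_unitize_sub_le hu _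
    _ ≤ 4 * (Fintype.card ι / (4 * K ^ 2)) := by gcongr
    _ = Fintype.card ι / K ^ 2 := by field_simp

theorem exists_mem_unitGrid_dotProduct_mulVec_le [DecidableEq ι] [Nonempty ι]
    {M : Matrix ι ι ℝ} {t ζ : ℝ} (ht : t ∈ spectrum ℝ M) (htζ : t ≤ ζ) (hζ0 : 0 < ζ)
    (hζ1 : ζ ≤ 1) (hM : ∑ i, ∑ j, M i j ^ 2 ≤ ζ⁻¹ ^ 2) :
    ∃ w ∈ unitGrid ι ⌈Fintype.card ι / ζ ^ 2⌉₊, (w : ι → ℝ) ⬝ᵥ M *ᵥ w ≤ 3 * ζ := by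
  obtain ⟨u, hu, hut⟩ := exists_sum_sq_eq_one_dotProduct_mulVec_eq ht
  set n : ℝ := (Fintype.card ι : ℝ)
  set K := ⌈n / ζ ^ 2⌉₊
  have hn : 1 ≤ n := Nat.one_le_cast.2 Fintype.card_pos
  have hKn : n ≤ ζ ^ 2 * K := by
    have := Nat.le_ceil (n / ζ ^ 2)
    rwa [div_le_iff₀ (by positivity), mul_comm] at this
  have hζ2 : ζ ^ 2 ≤ 1 := pow_le_one₀ hζ0.le hζ1
  have hK0 : (0 : ℝ) ≤ K := Nat.cast_nonneg K
  have hK : n < 4 * K ^ 2 := by nlinarith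
  obtain ⟨w, hw, hwu⟩ := exists_mem_unitGrid_sum_sq_sub_le hu hK
  have hδ : ∑ i, ((w : ι → ℝ) i - u i) ^ 2 ≤ (ζ ^ 2) ^ 2 :=
    hwu.trans (by rw [div_le_iff₀ (by positivity)]; nlinarith)
  refine ⟨w, hw, ?_⟩
  calc (w : ι → ℝ) ⬝ᵥ M *ᵥ w ≤ t + 2 * (ζ ^ 2 * ζ⁻¹) := by
        simpa only [hut] using
          dotProduct_mulVec_self_le_add hu w.2 hδ hM (by positivity) (by positivity)
    _ = t + 2 * ζ := by field_simp
    _ ≤ 3 * ζ := by linarith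

theorem card_unitGrid_mul_le [Nonempty ι] {ζ : ℝ} (hζ0 : 0 < ζ) (hζ1 : ζ ≤ 1) :
    ((unitGrid ι ⌈Fintype.card ι / ζ ^ 2⌉₊).card : ℝ) * (ζ ^ 2) ^ Fintype.card ι ≤
      (5 * Fintype.card ι) ^ Fintype.card ι := by
  set n := Fintype.card ι
  set K := ⌈(n : ℝ) / ζ ^ 2⌉₊
  have hn : (1 : ℝ) ≤ n := by exact_mod_cast Fintype.card_pos
  have hK : (K : ℝ) * ζ ^ 2 < n + ζ ^ 2 := by
    have := Nat.ceil_lt_add_one (by positivity : (0 : ℝ) ≤ n / ζ ^ 2)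
    rwa [← lt_div_iff₀ (by positivity), add_div, div_self (by positivity)]
  have hζ2 : ζ ^ 2 ≤ 1 := pow_le_one₀ hζ0.le hζ1
  calc ((unitGrid ι K).card : ℝ) * (ζ ^ 2) ^ n ≤ ((2 * K + 1 : ℕ) : ℝ) ^ n * (ζ ^ 2) ^ n := by
        gcongr; exact_mod_cast card_unitGrid_le K
    _ = ((2 * K + 1) * ζ ^ 2) ^ n := by rw [← mul_pow]; push_cast; rfl
    _ ≤ (5 * n) ^ n := pow_le_pow_left₀ (by positivity) (by nlinarith) n

theorem one_le_rpow_neg_add_rpow {M : Matrix ι ι ℝ} {u : ι → ℝ} {q r : ℝ}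
    (hu : ∑ i, u i ^ 2 = 1) (hpos : 0 < u ⬝ᵥ M *ᵥ u) (hq : 0 ≤ q) (hr : 0 ≤ r) :
    1 ≤ (u ⬝ᵥ M *ᵥ u) ^ (-q) + (∑ i, ∑ j, M i j ^ 2) ^ r := by
  have hF : 0 ≤ ∑ i, ∑ j, M i j ^ 2 := by positivity
  rcases le_or_gt (u ⬝ᵥ M *ᵥ u) 1 with hle | hgt
  · have := Real.one_le_rpow_of_pos_of_le_one_of_nonpos hpos hle (neg_nonpos.2 hq)
    linarith [Real.rpow_nonneg hF r]
  · have hsq := sq_dotProduct_mulVec_le M u u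
    rw [hu, one_mul, mul_one] at hsq
    have := Real.one_le_rpow (by nlinarith : (1 : ℝ) ≤ ∑ i, ∑ j, M i j ^ 2) hr
    linarith [Real.rpow_nonneg hpos.le (-q)]

end Deterministic

theorem le_zero_of_forall_le_mul_rpow {a K p : ℝ} (hp : 0 < p)
    (h : ∀ ε : ℝ, 0 < ε → ε ≤ 1 → a ≤ K * ε ^ p) : a ≤ 0 := by
  have hlim : Filter.Tendsto (fun ε : ℝ => K * ε ^ p) (nhdsWithin 0 (Set.Ioi 0)) (nhds 0) := by
    have := ((Real.continuousAt_rpow_const 0 p (Or.inr hp.le)).tendsto.const_mul K).mono_left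
      (nhdsWithin_le_nhds (s := Set.Ioi 0))
    simpa [Real.zero_rpow hp.ne'] using this
  refine ge_of_tendsto hlim ?_
  filter_upwards [Ioc_mem_nhdsGT zero_lt_one] with ε hε using h ε hε.1 hε.2

section Probability

variable {Ω : Type*} [MeasurableSpace Ω] {P : Measure Ω}

theorem measureReal_le_le_rpow_mul_integral_rpow_neg [IsFiniteMeasure P] {f : Ω → ℝ} {a q : ℝ}
    (hf : ∀ᵐ ω ∂P, 0 < f ω) (hint : Integrable (fun ω => f ω ^ (-q)) P) (ha : 0 < a)
    (hq : 0 ≤ q) : P.real {ω | f ω ≤ a} ≤ a ^ q * ∫ ω, f ω ^ (-q) ∂P := by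
  have hmarkov := mul_meas_ge_le_integral_of_nonneg
    (hf.mono fun ω h => Real.rpow_nonneg h.le (-q)) hint (a ^ q)⁻¹
  have hsub : P.real {ω | f ω ≤ a} ≤ P.real {ω | (a ^ q)⁻¹ ≤ f ω ^ (-q)} := by
    refine ENNReal.toReal_mono (measure_ne_top _ _) (measure_mono_ae ?_)
    filter_upwards [hf] with ω hω hle
    rw [← Real.rpow_neg ha.le]
    exact Real.rpow_le_rpow_of_nonpos hω hle (neg_nonpos.2 hq)
  exact hsub.trans ((inv_mul_le_iff₀ (by positivity)).1 hmarkov)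

theorem measureReal_lt_le_inv_rpow_mul_integral_rpow [IsFiniteMeasure P] {g : Ω → ℝ} {c r : ℝ}
    (hg : ∀ᵐ ω ∂P, 0 ≤ g ω) (hint : Integrable (fun ω => g ω ^ r) P) (hc : 0 < c)
    (hr : 0 ≤ r) : P.real {ω | c < g ω} ≤ (c ^ r)⁻¹ * ∫ ω, g ω ^ r ∂P := by
  have hmarkov := mul_meas_ge_le_integral_of_nonneg
    (hg.mono fun ω h => Real.rpow_nonneg h r) hint (c ^ r)
  have hsub : P.real {ω | c < g ω} ≤ P.real {ω | c ^ r ≤ g ω ^ r} :=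
    measureReal_mono fun ω hω => Real.rpow_le_rpow hc.le (le_of_lt hω) hr
  exact hsub.trans ((le_inv_mul_iff₀ (by positivity)).2 hmarkov)

variable {ι : Type*} [Fintype ι]

theorem one_le_integral_rpow_neg_add_integral_rpow [IsProbabilityMeasure P]
    {A : Ω → Matrix ι ι ℝ} {u : ι → ℝ} {q r : ℝ} (hu : ∑ i, u i ^ 2 = 1)
    (hpos : ∀ᵐ ω ∂P, 0 < u ⬝ᵥ A ω *ᵥ u)
    (hintQ : Integrable (fun ω => (u ⬝ᵥ A ω *ᵥ u) ^ (-q)) P)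
    (hintF : Integrable (fun ω => (∑ i, ∑ j, A ω i j ^ 2) ^ r) P) (hq : 0 ≤ q) (hr : 0 ≤ r) :
    1 ≤ (∫ ω, (u ⬝ᵥ A ω *ᵥ u) ^ (-q) ∂P) + ∫ ω, (∑ i, ∑ j, A ω i j ^ 2) ^ r ∂P := by
  rw [← integral_add hintQ hintF]
  simpa using integral_mono_ae (integrable_const 1) (hintQ.add hintF)
    (hpos.mono fun ω h => one_le_rpow_neg_add_rpow hu h hq hr)

theorem measureReal_inv_sq_lt_sum_sq_le [IsFiniteMeasure P] {A : Ω → Matrix ι ι ℝ} {p ζ : ℝ}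
    (hp : 0 ≤ p) (hF : Integrable (fun ω => (∑ i, ∑ j, A ω i j ^ 2) ^ (p / 2)) P) (hζ : 0 < ζ) :
    P.real {ω | ζ⁻¹ ^ 2 < ∑ i, ∑ j, A ω i j ^ 2} ≤
      ζ ^ p * ∫ ω, (∑ i, ∑ j, A ω i j ^ 2) ^ (p / 2) ∂P := by
  have hpow : (ζ⁻¹ ^ 2) ^ (p / 2) = (ζ ^ p)⁻¹ := by
    rw [inv_pow, Real.inv_rpow (by positivity), ← Real.rpow_natCast, ← Real.rpow_mul hζ.le]
    congr 2
    push_cast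
    ring
  simpa only [hpow, inv_inv] using measureReal_lt_le_inv_rpow_mul_integral_rpow
    (ae_of_all _ fun ω => by positivity) hF (by positivity : 0 < ζ⁻¹ ^ 2) (by positivity)

theorem measureReal_le_le_of_mem_spectrum_of_le_one [DecidableEq ι] [Nonempty ι] [IsFiniteMeasure P]
    {A : Ω → Matrix ι ι ℝ} {ν : Ω → ℝ} {p q S ζ : ℝ} (hp : 0 ≤ p)
    (hq : q = p + 2 * Fintype.card ι) (hν : ∀ᵐ ω ∂P, ν ω ∈ spectrum ℝ (A ω))
    (hpos : ∀ v : ι → ℝ, ∑ i, v i ^ 2 = 1 → ∀ᵐ ω ∂P, 0 < v ⬝ᵥ A ω *ᵥ v)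
    (hint : ∀ v : ι → ℝ, ∑ i, v i ^ 2 = 1 → Integrable (fun ω => (v ⬝ᵥ A ω *ᵥ v) ^ (-q)) P)
    (hS : ∀ v : ι → ℝ, ∑ i, v i ^ 2 = 1 → ∫ ω, (v ⬝ᵥ A ω *ᵥ v) ^ (-q) ∂P ≤ S) (hS0 : 0 ≤ S)
    (hF : Integrable (fun ω => (∑ i, ∑ j, A ω i j ^ 2) ^ (p / 2)) P)
    (hζ0 : 0 < ζ) (hζ1 : ζ ≤ 1) :
    P.real {ω | ν ω ≤ ζ} ≤
      ((5 * Fintype.card ι) ^ Fintype.card ι * 3 ^ q * S +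
        ∫ ω, (∑ i, ∑ j, A ω i j ^ 2) ^ (p / 2) ∂P) * ζ ^ p := by
  set n := Fintype.card ι
  set J := ∫ ω, (∑ i, ∑ j, A ω i j ^ 2) ^ (p / 2) ∂P
  set grid := unitGrid ι ⌈(n : ℝ) / ζ ^ 2⌉₊
  set E : {v : ι → ℝ // ∑ i, v i ^ 2 = 1} → Set Ω :=
    fun w => {ω | (w : ι → ℝ) ⬝ᵥ A ω *ᵥ w ≤ 3 * ζ}
  set B := {ω | ζ⁻¹ ^ 2 < ∑ i, ∑ j, A ω i j ^ 2}
  have hcover : {ω | ν ω ≤ ζ} ≤ᵐ[P] ((⋃ w ∈ grid, E w) ∪ B : Set Ω) := by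
    filter_upwards [hν] with ω hspec hle
    by_cases hB : ω ∈ B
    · exact Or.inr hB
    obtain ⟨w, hw, hQ⟩ :=
      exists_mem_unitGrid_dotProduct_mulVec_le hspec hle hζ0 hζ1 (not_lt.1 hB)
    exact Or.inl (Set.mem_biUnion hw hQ)
  have hE : ∀ w, P.real (E w) ≤ (3 * ζ) ^ q * S := fun w =>
    (measureReal_le_le_rpow_mul_integral_rpow_neg (hpos w w.2) (hint w w.2) (by positivity)
      (by rw [hq]; positivity)).trans (by gcongr; exact hS w w.2)
  have hB : P.real B ≤ ζ ^ p * J := measureReal_inv_sq_lt_sum_sq_le hp hF hζ0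
  have hζq : (3 * ζ) ^ q = 3 ^ q * (ζ ^ 2) ^ n * ζ ^ p := by
    rw [Real.mul_rpow (by norm_num) hζ0.le, hq, Real.rpow_add hζ0, ← pow_mul,
      show 2 * (n : ℝ) = ((2 * n : ℕ) : ℝ) by push_cast; ring, Real.rpow_natCast]
    ring
  calc P.real {ω | ν ω ≤ ζ} ≤ P.real ((⋃ w ∈ grid, E w) ∪ B) :=
        ENNReal.toReal_mono (measure_ne_top _ _) (measure_mono_ae hcover)
    _ ≤ ∑ w ∈ grid, P.real (E w) + P.real B :=
        (measureReal_union_le _ _).trans (by gcongr; exact measureReal_biUnion_finset_le _ _)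
    _ ≤ grid.card * ((3 * ζ) ^ q * S) + ζ ^ p * J := by
        gcongr
        simpa using Finset.sum_le_card_nsmul grid _ _ fun w _ => hE w
    _ = (grid.card * (ζ ^ 2) ^ n) * (3 ^ q * S * ζ ^ p) + J * ζ ^ p := by rw [hζq]; ring
    _ ≤ (5 * n) ^ n * (3 ^ q * S * ζ ^ p) + J * ζ ^ p := by
        gcongr
        exact card_unitGrid_mul_le hζ0 hζ1
    _ = ((5 * n) ^ n * 3 ^ q * S + J) * ζ ^ p := by ring

theorem measureReal_le_le_of_mem_spectrum [DecidableEq ι] [Nonempty ι] [IsProbabilityMeasure P]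
    {A : Ω → Matrix ι ι ℝ} {ν : Ω → ℝ} {p q S ζ : ℝ} (hp : 0 < p)
    (hq : q = p + 2 * Fintype.card ι) (hν : ∀ᵐ ω ∂P, ν ω ∈ spectrum ℝ (A ω))
    (hpos : ∀ v : ι → ℝ, ∑ i, v i ^ 2 = 1 → ∀ᵐ ω ∂P, 0 < v ⬝ᵥ A ω *ᵥ v)
    (hint : ∀ v : ι → ℝ, ∑ i, v i ^ 2 = 1 → Integrable (fun ω => (v ⬝ᵥ A ω *ᵥ v) ^ (-q)) P)
    (hS : ∀ v : ι → ℝ, ∑ i, v i ^ 2 = 1 → ∫ ω, (v ⬝ᵥ A ω *ᵥ v) ^ (-q) ∂P ≤ S)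
    (hF : Integrable (fun ω => (∑ i, ∑ j, A ω i j ^ 2) ^ (p / 2)) P) (hζ : 0 ≤ ζ) :
    P.real {ω | ν ω ≤ ζ} ≤ ((5 * Fintype.card ι) ^ Fintype.card ι * 3 ^ q + 1) *
      (S + ∫ ω, (∑ i, ∑ j, A ω i j ^ 2) ^ (p / 2) ∂P) * ζ ^ p := by
  set X : ℝ := (5 * Fintype.card ι) ^ Fintype.card ι * 3 ^ q
  set J := ∫ ω, (∑ i, ∑ j, A ω i j ^ 2) ^ (p / 2) ∂P
  have hX : 0 ≤ X := by positivity
  obtain ⟨u, hu⟩ : ∃ u : ι → ℝ, ∑ i, u i ^ 2 = 1 :=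
    ⟨Pi.single (Classical.arbitrary ι) 1, by simp [Pi.single_apply, ite_pow]⟩
  have hS0 : 0 ≤ S := (integral_nonneg_of_ae
    ((hpos u hu).mono fun ω h => Real.rpow_nonneg h.le _)).trans (hS u hu)
  have hJ0 : 0 ≤ J := integral_nonneg fun ω => by positivity
  have hSJ : 1 ≤ S + J := (one_le_integral_rpow_neg_add_integral_rpow hu (hpos u hu) (hint u hu)
    hF (by rw [hq]; positivity) (by positivity)).trans (by linarith [hS u hu])
  have hsmall : ∀ ε, 0 < ε → ε ≤ 1 → P.real {ω | ν ω ≤ ε} ≤ (X + 1) * (S + J) * ε ^ p :=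
    fun ε hε0 hε1 => (measureReal_le_le_of_mem_spectrum_of_le_one hp.le hq hν hpos hint hS hS0
      hF hε0 hε1).trans (by gcongr; nlinarith [mul_nonneg hX hJ0])
  rcases hζ.eq_or_lt with rfl | hζ0
  · rw [Real.zero_rpow hp.ne', mul_zero]
    exact le_zero_of_forall_le_mul_rpow hp fun ε hε0 hε1 =>
      (measureReal_mono fun ω h => le_trans h hε0.le).trans (hsmall ε hε0 hε1)
  rcases le_or_gt ζ 1 with hζ1 | hζ1
  · exact hsmall ζ hζ0 hζ1
  calc P.real {ω | ν ω ≤ ζ} ≤ 1 := measureReal_le_one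
    _ ≤ (X + 1) * (S + J) * 1 := by nlinarith [mul_nonneg hX (by linarith : 0 ≤ S + J)]
    _ ≤ (X + 1) * (S + J) * ζ ^ p := by gcongr; exact Real.one_le_rpow hζ1.le (by positivity)

end Probability

/-- Lemma 5.2: tail bound for the smallest eigenvalue `ν` of a random symmetric
positive semidefinite matrix `A`, with a constant depending only on `p` and `d`. -/
theorem smallest_eigenvalue_tail_bound (d : ℕ) (hd : 0 < d) (p : ℝ) (hp : 1 ≤ p) :
    ∃ C > 0,
      ∀ (Ω : Type) (mΩ : MeasurableSpace Ω) (P : Measure Ω),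
        IsProbabilityMeasure P →
      ∀ A : Ω → Matrix (Fin d) (Fin d) ℝ, (∀ i j, Measurable fun ω => A ω i j) →
      (∀ᵐ ω ∂P, (A ω).IsSymm ∧ (A ω).PosSemidef) →
      ∀ ν : Ω → ℝ, Measurable ν →
      -- `ν ω` is the smallest eigenvalue of `A ω`
      (∀ᵐ ω ∂P, ν ω ∈ spectrum ℝ (A ω) ∧ ∀ μ ∈ spectrum ℝ (A ω), ν ω ≤ μ) →
      -- the quadratic form is a.s. positive at every unit vector
      (∀ v : Fin d → ℝ, (∑ i, v i ^ 2) = 1 → ∀ᵐ ω ∂P, 0 < v ⬝ᵥ (A ω).mulVec v) →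
      -- finiteness of the negative moments of the quadratic form
      (∀ v : Fin d → ℝ, (∑ i, v i ^ 2) = 1 →
        Integrable (fun ω => (v ⬝ᵥ (A ω).mulVec v) ^ (-(p + 2 * (d : ℝ)))) P) →
      -- finiteness of the supremum over the unit sphere
      BddAbove (Set.range (fun v : {v : Fin d → ℝ // (∑ i, v i ^ 2) = 1} =>
        ∫ ω, ((v : Fin d → ℝ) ⬝ᵥ (A ω).mulVec (v : Fin d → ℝ)) ^ (-(p + 2 * (d : ℝ))) ∂P)) →
      -- finiteness of the moment of the Frobenius norm
      Integrable (fun ω => (∑ i, ∑ j, (A ω i j) ^ 2) ^ (p / 2)) P →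
      ∀ ζ : ℝ, 0 ≤ ζ →
        (P {ω | ν ω ≤ ζ}).toReal ≤
          C * ((⨆ v : {v : Fin d → ℝ // (∑ i, v i ^ 2) = 1},
                ∫ ω, ((v : Fin d → ℝ) ⬝ᵥ (A ω).mulVec (v : Fin d → ℝ)) ^
                  (-(p + 2 * (d : ℝ))) ∂P) +
              ∫ ω, (∑ i, ∑ j, (A ω i j) ^ 2) ^ (p / 2) ∂P) * ζ ^ p := by
  refine ⟨(5 * d) ^ d * 3 ^ (p + 2 * (d : ℝ)) + 1, by positivity, ?_⟩
  intro Ω _ P _ A _ _ ν _ hν hpos hint hbdd hF ζ hζ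
  have : Nonempty (Fin d) := ⟨⟨0, hd⟩⟩
  have h := measureReal_le_le_of_mem_spectrum (by positivity) (by rw [Fintype.card_fin])
    (hν.mono fun ω h => h.1) hpos hint (fun v hv => le_ciSup hbdd ⟨v, hv⟩) hF hζ
  rwa [Fintype.card_fin] at h
end

section
/- Let M be a symmetric positive definite d×d real matrix. Then there exist constants C > 0 and c₁ > 0 such that for all x, w ∈ ℝ^d: |e^{−(1/2)xᵀMx} − e^{−(1/2)wᵀMw}| ≤ C·max(e^{−c₁|x|²}, e^{−c₁|w|²})·(|x−w| + |x−w|²). -/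
/-!
The quadratic form `q v = ½ vᵀMv` is coercive, `μ‖v‖² ≤ q v` (positivity on the compact unit
sphere), and satisfies `|q x - q w| ≤ ‖M‖ ‖x - w‖ (‖x‖ + ‖w‖)`. For `‖x‖ ≤ ‖w‖` the mean value
bound `|e^{-a} - e^{-b}| ≤ max (e^{-a}) (e^{-b}) |a - b|` then produces the factor
`e^{-μ‖x‖²} = F²` with `F = e^{-μ‖x‖²/2}`: one copy of `F` absorbs the linear growth in `‖x‖`,
since `t e^{-ct²}` is bounded, and the other is the Gaussian weight with `c₁ = μ / 2`.
-/

open Matrix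

open Real Metric

open scoped RealInnerProductSpace

theorem abs_exp_neg_sub_exp_neg_le (a b : ℝ) :
    |exp (-a) - exp (-b)| ≤ max (exp (-a)) (exp (-b)) * |a - b| := by
  wlog hab : a ≤ b generalizing a b
  · rw [abs_sub_comm, max_comm, abs_sub_comm a b]
    exact this b a (le_of_not_ge hab)
  have hexp : exp (-b) ≤ exp (-a) := exp_le_exp.2 (neg_le_neg hab)
  rw [abs_of_nonneg (sub_nonneg.2 hexp), max_eq_left hexp, abs_sub_comm,
    abs_of_nonneg (sub_nonneg.2 hab)]
  calc exp (-a) - exp (-b) = exp (-a) * (1 - exp (-(b - a))) := by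
        rw [mul_sub, mul_one, ← exp_add]; ring_nf
    _ ≤ exp (-a) * (b - a) :=
        mul_le_mul_of_nonneg_left (by linarith [one_sub_le_exp_neg (b - a)]) (exp_pos _).le

theorem mul_exp_neg_mul_sq_le {c : ℝ} (hc : 0 < c) (t : ℝ) :
    t * exp (-(c * t ^ 2)) ≤ 1 + c⁻¹ := by
  have hexp_le_one : exp (-(c * t ^ 2)) ≤ 1 := exp_le_one_iff.2 (neg_nonpos.2 (by positivity))
  have hsq : t ^ 2 * exp (-(c * t ^ 2)) ≤ c⁻¹ :=
    calc t ^ 2 * exp (-(c * t ^ 2)) = c⁻¹ * (c * t ^ 2 * exp (-(c * t ^ 2))) := by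
          field_simp
      _ ≤ c⁻¹ * 1 := by
          gcongr
          exact (mul_exp_neg_le_exp_neg_one _).trans (exp_le_one_iff.2 (by norm_num))
      _ = c⁻¹ := mul_one _
  nlinarith [sq_nonneg (t - 1), exp_pos (-(c * t ^ 2))]

section GaussianDifference

variable {E : Type*} [SeminormedAddCommGroup E] {q : E → ℝ} {μ K : ℝ}

theorem abs_exp_neg_sub_exp_neg_le_of_norm_le (hμ : 0 < μ) (hK : 0 ≤ K)
    (hlow : ∀ v, μ * ‖v‖ ^ 2 ≤ q v)
    (hsub : ∀ x w, |q x - q w| ≤ K * ‖x - w‖ * (‖x‖ + ‖w‖)) {x w : E} (hxw : ‖x‖ ≤ ‖w‖) :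
    |exp (-q x) - exp (-q w)| ≤
      K * (2 * (1 + (μ / 2)⁻¹) + 1) * exp (-(μ / 2 * ‖x‖ ^ 2)) * (‖x - w‖ + ‖x - w‖ ^ 2) := by
  have hB : 0 ≤ 1 + (μ / 2)⁻¹ := by positivity
  set B := 1 + (μ / 2)⁻¹
  set F := exp (-(μ / 2 * ‖x‖ ^ 2))
  set D := ‖x - w‖
  have hmax : max (exp (-q x)) (exp (-q w)) ≤ F * F := by
    have hxw2 : μ * ‖x‖ ^ 2 ≤ μ * ‖w‖ ^ 2 := by gcongr
    rw [← exp_add]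
    apply max_le <;> apply exp_le_exp.2 <;> linarith [hlow x, hlow w]
  have hq : |q x - q w| ≤ K * D * (2 * ‖x‖ + D) :=
    (hsub x w).trans <| mul_le_mul_of_nonneg_left (by linarith [norm_le_insert x w])
      (by positivity)
  have hF : F ≤ 1 := exp_le_one_iff.2 (neg_nonpos.2 (by positivity))
  have hFD : F * D ^ 2 ≤ D ^ 2 := mul_le_of_le_one_left (sq_nonneg D) hF
  have hFx : F * ‖x‖ ≤ B := by
    rw [mul_comm]
    exact mul_exp_neg_mul_sq_le (half_pos hμ) ‖x‖
  have hBD : 2 * B * D + D ^ 2 ≤ (2 * B + 1) * (D + D ^ 2) := by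
    nlinarith [norm_nonneg (x - w)]
  calc |exp (-q x) - exp (-q w)| ≤ max (exp (-q x)) (exp (-q w)) * |q x - q w| :=
        abs_exp_neg_sub_exp_neg_le _ _
    _ ≤ F * F * (K * D * (2 * ‖x‖ + D)) := by gcongr
    _ = K * F * (2 * (F * ‖x‖) * D + F * D ^ 2) := by ring
    _ ≤ K * F * (2 * B * D + D ^ 2) := by gcongr
    _ ≤ K * F * ((2 * B + 1) * (D + D ^ 2)) := by gcongr
    _ = K * (2 * B + 1) * F * (D + D ^ 2) := by ring

theorem exists_abs_exp_neg_sub_exp_neg_le (hμ : 0 < μ) (hK : 0 ≤ K)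
    (hlow : ∀ v, μ * ‖v‖ ^ 2 ≤ q v)
    (hsub : ∀ x w, |q x - q w| ≤ K * ‖x - w‖ * (‖x‖ + ‖w‖)) :
    ∃ C > 0, ∀ x w : E, |exp (-q x) - exp (-q w)| ≤
      C * max (exp (-(μ / 2 * ‖x‖ ^ 2))) (exp (-(μ / 2 * ‖w‖ ^ 2))) *
        (‖x - w‖ + ‖x - w‖ ^ 2) := by
  set C := K * (2 * (1 + (μ / 2)⁻¹) + 1)
  have hC : 0 ≤ C := by positivity
  have hle : ∀ x w : E, ‖x‖ ≤ ‖w‖ → |exp (-q x) - exp (-q w)| ≤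
      (C + 1) * max (exp (-(μ / 2 * ‖x‖ ^ 2))) (exp (-(μ / 2 * ‖w‖ ^ 2))) *
        (‖x - w‖ + ‖x - w‖ ^ 2) := fun x w hxw =>
    (abs_exp_neg_sub_exp_neg_le_of_norm_le hμ hK hlow hsub hxw).trans <| by
      gcongr
      · linarith
      · exact le_max_left _ _
  refine ⟨C + 1, by positivity, fun x w => ?_⟩
  rcases le_total ‖x‖ ‖w‖ with hxw | hwx
  · exact hle x w hxw
  · rw [abs_sub_comm, max_comm, norm_sub_rev]
    exact hle w x hwx

end GaussianDifference

namespace ContinuousLinearMap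

variable {E : Type*} [NormedAddCommGroup E] [InnerProductSpace ℝ E]

theorem abs_inner_map_le (T : E →L[ℝ] E) (u v : E) : |⟪u, T v⟫| ≤ ‖T‖ * ‖u‖ * ‖v‖ :=
  calc |⟪u, T v⟫| ≤ ‖u‖ * ‖T v‖ := abs_real_inner_le_norm _ _
    _ ≤ ‖u‖ * (‖T‖ * ‖v‖) := by gcongr; exact T.le_opNorm v
    _ = ‖T‖ * ‖u‖ * ‖v‖ := by ring

theorem abs_inner_map_self_sub_inner_map_self_le (T : E →L[ℝ] E) (x w : E) :
    |⟪x, T x⟫ - ⟪w, T w⟫| ≤ ‖T‖ * ‖x - w‖ * (‖x‖ + ‖w‖) := by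
  have hsplit : ⟪x, T x⟫ - ⟪w, T w⟫ = ⟪x - w, T x⟫ + ⟪w, T (x - w)⟫ := by
    rw [inner_sub_left, map_sub, inner_sub_right]; ring
  calc |⟪x, T x⟫ - ⟪w, T w⟫| ≤ |⟪x - w, T x⟫| + |⟪w, T (x - w)⟫| := hsplit ▸ abs_add_le _ _
    _ ≤ ‖T‖ * ‖x - w‖ * ‖x‖ + ‖T‖ * ‖w‖ * ‖x - w‖ :=
        add_le_add (T.abs_inner_map_le _ _) (T.abs_inner_map_le _ _)
    _ = ‖T‖ * ‖x - w‖ * (‖x‖ + ‖w‖) := by ring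

theorem exists_pos_mul_sq_norm_le_inner_map_self [FiniteDimensional ℝ E] (T : E →L[ℝ] E)
    (hT : ∀ v ≠ 0, 0 < ⟪v, T v⟫) : ∃ μ > 0, ∀ v, μ * ‖v‖ ^ 2 ≤ ⟪v, T v⟫ := by
  rcases subsingleton_or_nontrivial E with hE | hE
  · exact ⟨1, one_pos, fun v => by simp [Subsingleton.elim v 0]⟩
  obtain ⟨v₀, hv₀, hmin⟩ := (isCompact_sphere (0 : E) 1).exists_isMinOn
    (NormedSpace.sphere_nonempty.2 zero_le_one)
    (by fun_prop : Continuous fun v => ⟪v, T v⟫).continuousOn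
  have hv₀_ne : v₀ ≠ 0 := by rintro rfl; simp at hv₀
  refine ⟨_, hT v₀ hv₀_ne, fun v => ?_⟩
  rcases eq_or_ne v 0 with rfl | hv
  · simp
  have hunit : ‖v‖⁻¹ • v ∈ sphere (0 : E) 1 := by simp [norm_smul, hv]
  have hle : ⟪v₀, T v₀⟫ ≤ ⟪‖v‖⁻¹ • v, T (‖v‖⁻¹ • v)⟫ := hmin hunit
  rw [map_smul, real_inner_smul_left, real_inner_smul_right] at hle
  calc ⟪v₀, T v₀⟫ * ‖v‖ ^ 2 ≤ (‖v‖⁻¹ * (‖v‖⁻¹ * ⟪v, T v⟫)) * ‖v‖ ^ 2 := by gcongr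
    _ = ⟪v, T v⟫ := by field_simp

end ContinuousLinearMap

theorem gaussian_kernel_difference_estimate_general (d : ℕ)
    (M : Matrix (Fin d) (Fin d) ℝ) (hM : M.PosDef) :
    ∃ C > 0, ∃ c₁ > 0, ∀ x w : Fin d → ℝ,
      |Real.exp (-(1 / 2) * (x ⬝ᵥ M.mulVec x)) -
          Real.exp (-(1 / 2) * (w ⬝ᵥ M.mulVec w))| ≤
        C * max (Real.exp (-c₁ * ∑ i, x i ^ 2)) (Real.exp (-c₁ * ∑ i, w i ^ 2)) *
          (Real.sqrt (∑ i, (x i - w i) ^ 2) + ∑ i, (x i - w i) ^ 2) := by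
  set T : EuclideanSpace ℝ (Fin d) →L[ℝ] EuclideanSpace ℝ (Fin d) :=
    (1 / 2 : ℝ) • toEuclideanCLM (𝕜 := ℝ) M
  have hT : ∀ x : Fin d → ℝ, ⟪WithLp.toLp 2 x, T (WithLp.toLp 2 x)⟫ = 1 / 2 * (x ⬝ᵥ M *ᵥ x) :=
    fun x => by rw [_root_.smul_apply, real_inner_smul_right, inner_toEuclideanCLM]
  obtain ⟨μ, hμ, hlow⟩ := T.exists_pos_mul_sq_norm_le_inner_map_self fun v hv => by
    rw [hT]
    have hpos := hM.dotProduct_mulVec_pos (x := WithLp.ofLp v) (by simpa using hv)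
    rw [star_trivial] at hpos
    positivity
  obtain ⟨C, hC, hbound⟩ := exists_abs_exp_neg_sub_exp_neg_le hμ (norm_nonneg T) hlow
    T.abs_inner_map_self_sub_inner_map_self_le
  refine ⟨C, hC, μ / 2, half_pos hμ, fun x w => ?_⟩
  have hnorm_sq : ∀ v : Fin d → ℝ, ‖WithLp.toLp 2 v‖ ^ 2 = ∑ i, v i ^ 2 := fun v =>
    EuclideanSpace.real_norm_sq_eq _
  have hnorm : ∀ v : Fin d → ℝ, ‖WithLp.toLp 2 v‖ = √(∑ i, v i ^ 2) := fun v => by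
    rw [EuclideanSpace.norm_eq]; simp
  have := hbound (WithLp.toLp 2 x) (WithLp.toLp 2 w)
  rw [← WithLp.toLp_sub] at this
  simp only [hnorm_sq] at this
  simp only [hnorm, hT, Pi.sub_apply] at this
  simpa only [neg_mul] using this

/-- Gaussian-density difference estimate (display (3.8) of the paper): for a symmetric
positive definite matrix `M`, the difference of the Gaussian kernels at `x` and `w` is
controlled by a Gaussian factor times `|x - w| + |x - w|²`. -/
theorem gaussian_kernel_difference_estimate (d : ℕ)
    (M : Matrix (Fin d) (Fin d) ℝ) (hsymm : M.IsSymm) (hM : M.PosDef) :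
    ∃ C > 0, ∃ c₁ > 0, ∀ x w : Fin d → ℝ,
      |Real.exp (-(1 / 2) * (x ⬝ᵥ M.mulVec x)) -
          Real.exp (-(1 / 2) * (w ⬝ᵥ M.mulVec w))| ≤
        C * max (Real.exp (-c₁ * ∑ i, x i ^ 2)) (Real.exp (-c₁ * ∑ i, w i ^ 2)) *
          (Real.sqrt (∑ i, (x i - w i) ^ 2) + ∑ i, (x i - w i) ^ 2) :=
  gaussian_kernel_difference_estimate_general d M hM
end

section
/- Let d ≤ n be positive integers, λ₁,…,λ_d > 0, σ a real d×n matrix of rank d, and for t ∈ (0,∞] let C_t be the d×d matrix with entries C_t^{jk} = Σ_{l=1}^n σ^j_l σ^k_l (1 − e^{−(λ_j+λ_k)t})/(λ_j+λ_k), with C₀ := C_∞. Then there exist constants C, q, t₀ > 0 such that for all T ≥ t₀: (i) ‖C_T − C₀‖_F ≤ C e^{−qT}; (ii) C_T and C₀ are invertible and ‖C_T^{−1} − C₀^{−1}‖_F ≤ C e^{−qT}; and (iii) |1 − √(det C_T / det C₀)| ≤ C e^{−qT}. -/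
open Matrix

/-- Covariance matrix `C_t` of the Gaussian process, for finite `t`. -/
noncomputable def covT {d n : ℕ} (lam : Fin d → ℝ) (σ : Matrix (Fin d) (Fin n) ℝ)
    (t : ℝ) : Matrix (Fin d) (Fin d) ℝ :=
  Matrix.of fun j k =>
    ∑ l, σ j l * σ k l * (1 - Real.exp (-(lam j + lam k) * t)) / (lam j + lam k)

/-- Limiting covariance matrix `C₀ = C_∞`. -/
noncomputable def covInf {d n : ℕ} (lam : Fin d → ℝ) (σ : Matrix (Fin d) (Fin n) ℝ) :
    Matrix (Fin d) (Fin d) ℝ :=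
  Matrix.of fun j k => ∑ l, σ j l * σ k l / (lam j + lam k)

/-!
Entrywise, `C_T - C₀ = -e^{-(λ_j+λ_k)T} C₀`, so `C_T → C₀` exponentially fast in Frobenius norm.
The limit `C₀` is the Hadamard product of `σσᵀ`, positive definite because `σ` has full row
rank, with the Cauchy matrix `((λ_j+λ_k)⁻¹)`, which is the Gram matrix of the functions
`s ↦ e^{λ_j s}` in `L²(-∞, 0]` and has positive diagonal; by (a strict form of) the Schur product
theorem `C₀` is positive definite, hence invertible. Inversion and `M ↦ √(det M / det C₀)` are
differentiable at `C₀`, so they inherit the exponential rate.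
-/

open Asymptotics Filter Topology MeasureTheory Set

attribute [local instance] Matrix.frobeniusNormedAddCommGroup Matrix.frobeniusNormedSpace
  Matrix.frobeniusNormedRing Matrix.frobeniusNormedAlgebra

noncomputable def cauchyMatrix {ι : Type*} (lam : ι → ℝ) : Matrix ι ι ℝ :=
  of fun j k => (lam j + lam k)⁻¹

theorem posSemidef_cauchyMatrix {ι : Type*} [Fintype ι] {lam : ι → ℝ} (hlam : ∀ i, 0 < lam i) :
    (cauchyMatrix lam).PosSemidef := by
  refine .of_dotProduct_mulVec_nonneg (by ext j k; simp [cauchyMatrix, add_comm]) fun x => ?_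
  have hint (j k : ι) :
      IntegrableOn (fun s => x j * x k * Real.exp ((lam j + lam k) * s)) (Iic 0) :=
    (integrableOn_exp_mul_Iic (add_pos (hlam j) (hlam k)) 0).const_mul _
  have hgram : star x ⬝ᵥ (cauchyMatrix lam *ᵥ x) =
      ∫ s in Iic 0, (∑ j, x j * Real.exp (lam j * s)) ^ 2 := by
    simp_rw [sq, Finset.sum_mul_sum, mul_mul_mul_comm _ (Real.exp _), ← Real.exp_add, ← add_mul]
    rw [integral_finsetSum _ fun j _ => integrable_finsetSum _ fun k _ => hint j k]
    simp_rw [integral_finsetSum _ fun k _ => hint _ k, integral_const_mul,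
      integral_exp_mul_Iic (add_pos (hlam _) (hlam _)), mul_zero, Real.exp_zero, one_div,
      dotProduct, mulVec, dotProduct, Finset.mul_sum, cauchyMatrix, of_apply, star_trivial]
    refine Finset.sum_congr rfl fun j _ => Finset.sum_congr rfl fun k _ => by ring
  exact hgram ▸ setIntegral_nonneg measurableSet_Iic fun s _ => sq_nonneg _

section Schur

open scoped ComplexOrder

variable {𝕜 n : Type*} [RCLike 𝕜] [Fintype n] [DecidableEq n]

open scoped MatrixOrder in
theorem Matrix.PosDef.exists_pos_sub_smul_one_posSemidef {A : Matrix n n 𝕜} (hA : A.PosDef) :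
    ∃ r : ℝ, 0 < r ∧ (A - r • 1).PosSemidef := by
  cases isEmpty_or_nonempty n
  · exact ⟨1, one_pos, Subsingleton.elim 0 (A - (1 : ℝ) • 1) ▸ .zero⟩
  obtain ⟨r, hr, hle⟩ := (CFC.exists_pos_algebraMap_le_iff hA.isHermitian.isSelfAdjoint).2
    fun x hx => hA.isStrictlyPositive.spectrum_pos hx
  exact ⟨r, hr, Matrix.le_iff.1 (by simpa [Algebra.algebraMap_eq_smul_one] using hle)⟩

theorem Matrix.PosDef.hadamard_posSemidef {A B : Matrix n n 𝕜} (hA : A.PosDef)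
    (hB : B.PosSemidef) (hdiag : ∀ i, 0 < B i i) : (A ⊙ B).PosDef := by
  obtain ⟨r, hr, hAr⟩ := hA.exists_pos_sub_smul_one_posSemidef
  have hsplit : A ⊙ B = (A - r • 1) ⊙ B + r • diagonal B.diag := by
    rw [← one_hadamard, ← smul_hadamard, ← add_hadamard, sub_add_cancel]
  rw [hsplit]
  exact .posSemidef_add (hAr.hadamard hB) ((posDef_diagonal_iff.2 hdiag).smul hr)

end Schur

theorem Matrix.isUnit_of_rank_eq_card {m K : Type*} [Fintype m] [DecidableEq m] [Field K]
    {A : Matrix m m K} (h : A.rank = Fintype.card m) : IsUnit A := by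
  refine mulVec_surjective_iff_isUnit.1 fun v => ?_
  have htop : LinearMap.range A.mulVecLin = ⊤ :=
    Submodule.eq_top_of_finrank_eq (by rw [← rank, h, Module.finrank_fintype_fun_eq_card])
  exact LinearMap.range_eq_top.1 htop v

theorem Matrix.posDef_mul_transpose_of_rank_eq_card {m n : Type*} [Fintype m] [DecidableEq m]
    [Fintype n] {A : Matrix m n ℝ} (h : A.rank = Fintype.card m) : (A * Aᵀ).PosDef := by
  have hpsd : (A * Aᵀ).PosSemidef := by
    simpa [conjTranspose_eq_transpose_of_trivial] using posSemidef_self_mul_conjTranspose A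
  exact hpsd.posDef_iff_isUnit.2 (isUnit_of_rank_eq_card (by rw [rank_self_mul_transpose, h]))

theorem Matrix.frobenius_norm_eq_sqrt {m n : Type*} [Fintype m] [Fintype n] (A : Matrix m n ℝ) :
    ‖A‖ = √(∑ i, ∑ j, A i j ^ 2) := by
  simp [frobenius_norm_def, Real.sqrt_eq_rpow]

theorem Matrix.frobenius_norm_le_of_forall_norm_le {m n α β : Type*} [Fintype m] [Fintype n]
    [NormedAddCommGroup α] [NormedAddCommGroup β] {A : Matrix m n α} {B : Matrix m n β} {c : ℝ}
    (hc : 0 ≤ c) (h : ∀ i j, ‖A i j‖ ≤ c * ‖B i j‖) : ‖A‖ ≤ c * ‖B‖ := by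
  simp only [frobenius_norm_def, Real.rpow_two, ← Real.sqrt_eq_rpow]
  rw [← Real.sqrt_sq hc, ← Real.sqrt_mul (sq_nonneg c)]
  simp only [Finset.mul_sum]
  gcongr with i _ j _
  calc ‖A i j‖ ^ 2 ≤ (c * ‖B i j‖) ^ 2 := pow_le_pow_left₀ (norm_nonneg _) (h i j) 2
    _ = c ^ 2 * ‖B i j‖ ^ 2 := mul_pow _ _ _

@[fun_prop]
theorem differentiable_det {n : Type*} [Fintype n] [DecidableEq n] :
    Differentiable ℝ (fun A : Matrix n n ℝ => A.det) := by
  simp only [det_apply]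
  fun_prop

theorem differentiableAt_nonsing_inv {n : Type*} [Fintype n] [DecidableEq n] {A : Matrix n n ℝ}
    (hA : IsUnit A) : DifferentiableAt ℝ (fun M : Matrix n n ℝ => M⁻¹) A := by
  simp only [nonsing_inv_eq_ringInverse]
  exact differentiableAt_inverse hA

theorem DifferentiableAt.isBigO_comp_sub {α 𝕜 E F : Type*} [NontriviallyNormedField 𝕜]
    [NormedAddCommGroup E] [NormedSpace 𝕜 E] [NormedAddCommGroup F] [NormedSpace 𝕜 F]
    {f : E → F} {x₀ : E} (hf : DifferentiableAt 𝕜 f x₀) {l : Filter α} {u : α → E} {g : α → ℝ}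
    (hu : (fun a => u a - x₀) =O[l] g) (hg : Tendsto g l (𝓝 0)) :
    (fun a => f (u a) - f x₀) =O[l] g :=
  (hf.isBigO_sub.comp_tendsto (tendsto_sub_nhds_zero_iff.1 (hu.trans_tendsto hg))).trans hu

section Covariance

variable {d n : ℕ} {lam : Fin d → ℝ} {σ : Matrix (Fin d) (Fin n) ℝ}

theorem covInf_eq_hadamard :
    covInf lam σ = (σ * σᵀ) ⊙ cauchyMatrix lam := by
  ext j k
  simp [covInf, cauchyMatrix, mul_apply, Finset.sum_mul, div_eq_mul_inv]

theorem covInf_posDef (hlam : ∀ i, 0 < lam i) (hσ : σ.rank = d) : (covInf lam σ).PosDef := by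
  rw [covInf_eq_hadamard]
  refine (posDef_mul_transpose_of_rank_eq_card (by simpa using hσ)).hadamard_posSemidef
    (posSemidef_cauchyMatrix hlam) fun i => ?_
  simpa [cauchyMatrix] using add_pos (hlam i) (hlam i)

theorem covT_sub_covInf_apply (T : ℝ) (j k : Fin d) :
    (covT lam σ T - covInf lam σ) j k = -(Real.exp (-(lam j + lam k) * T) * covInf lam σ j k) := by
  simp only [covT, covInf, Matrix.sub_apply, of_apply, Finset.mul_sum, ← Finset.sum_sub_distrib,
    ← Finset.sum_neg_distrib]
  exact Finset.sum_congr rfl fun l _ => by ring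

theorem norm_covT_sub_covInf_le {q : ℝ} (hq : ∀ j k, q ≤ lam j + lam k) {T : ℝ} (hT : 0 ≤ T) :
    ‖covT lam σ T - covInf lam σ‖ ≤ Real.exp (-q * T) * ‖covInf lam σ‖ := by
  refine frobenius_norm_le_of_forall_norm_le (Real.exp_pos _).le fun j k => ?_
  rw [covT_sub_covInf_apply, norm_neg, norm_mul, Real.norm_of_nonneg (Real.exp_pos _).le]
  gcongr
  exact hq j k

theorem isBigO_covT_sub_covInf {q : ℝ} (hq : ∀ j k, q ≤ lam j + lam k) :
    (fun T => covT lam σ T - covInf lam σ) =O[atTop] fun T => Real.exp (-q * T) := by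
  refine .of_bound ‖covInf lam σ‖ ?_
  filter_upwards [eventually_ge_atTop 0] with T hT
  rw [Real.norm_of_nonneg (Real.exp_pos _).le, mul_comm]
  exact norm_covT_sub_covInf_le hq hT

end Covariance

theorem Asymptotics.IsBigO.exists_pos_eventually_le₃ {α E₁ E₂ E₃ : Type*}
    [SeminormedAddCommGroup E₁] [SeminormedAddCommGroup E₂] [SeminormedAddCommGroup E₃]
    {l : Filter α} {f₁ : α → E₁} {f₂ : α → E₂} {f₃ : α → E₃} {g : α → ℝ}
    (h₁ : f₁ =O[l] g) (h₂ : f₂ =O[l] g) (h₃ : f₃ =O[l] g) :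
    ∃ C > 0, ∀ᶠ x in l,
      ‖f₁ x‖ ≤ C * ‖g x‖ ∧ ‖f₂ x‖ ≤ C * ‖g x‖ ∧ ‖f₃ x‖ ≤ C * ‖g x‖ := by
  obtain ⟨C, hC, hsum⟩ := ((h₁.norm_left.add h₂.norm_left).add h₃.norm_left).exists_pos
  refine ⟨C, hC, hsum.bound.mono fun x hx => ?_⟩
  rw [Real.norm_of_nonneg (by positivity)] at hx
  have := norm_nonneg (f₁ x); have := norm_nonneg (f₂ x); have := norm_nonneg (f₃ x)
  exact ⟨by linarith, by linarith, by linarith⟩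

theorem covariance_convergence_estimates_general (d n : ℕ)
    (lam : Fin d → ℝ) (hpos : ∀ i, 0 < lam i)
    (σ : Matrix (Fin d) (Fin n) ℝ) (hrank : σ.rank = d) :
    ∃ C > 0, ∃ q > 0, ∃ t₀ > 0, ∀ T : ℝ, t₀ ≤ T →
      (Real.sqrt (∑ j, ∑ k, (covT lam σ T j k - covInf lam σ j k) ^ 2) ≤
          C * Real.exp (-q * T)) ∧
      (IsUnit (covT lam σ T).det ∧ IsUnit (covInf lam σ).det) ∧
      (Real.sqrt (∑ j, ∑ k, ((covT lam σ T)⁻¹ j k - (covInf lam σ)⁻¹ j k) ^ 2) ≤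
          C * Real.exp (-q * T)) ∧
      |1 - Real.sqrt ((covT lam σ T).det / (covInf lam σ).det)| ≤
          C * Real.exp (-q * T) := by
  set C₀ := covInf lam σ
  have hC₀ : C₀.PosDef := covInf_posDef hpos hrank
  have hdet : C₀.det ≠ 0 := hC₀.det_pos.ne'
  obtain ⟨⟨q, hq⟩, hqle⟩ := Finite.exists_ge (α := Ioi (0 : ℝ)) fun (jk : Fin d × Fin d) =>
    ⟨lam jk.1 + lam jk.2, add_pos (hpos _) (hpos _)⟩
  have hg : Tendsto (fun T => Real.exp (-q * T)) atTop (𝓝 0) :=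
    Real.tendsto_exp_atBot.comp (tendsto_id.const_mul_atTop_of_neg (neg_lt_zero.2 hq))
  have hcov := isBigO_covT_sub_covInf (σ := σ) fun j k => hqle (j, k)
  have hinv := (differentiableAt_nonsing_inv hC₀.isUnit).isBigO_comp_sub hcov hg
  have hsqrt : DifferentiableAt ℝ (fun M : Matrix (Fin d) (Fin d) ℝ => √(M.det / C₀.det)) C₀ := by
    fun_prop (disch := simp [hdet])
  have hratio := hsqrt.isBigO_comp_sub hcov hg
  have hunit : ∀ᶠ T in atTop, (covT lam σ T).det ≠ 0 :=
    ((differentiable_det C₀).continuousAt.tendsto.comp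
      (tendsto_sub_nhds_zero_iff.1 (hcov.trans_tendsto hg))).eventually_ne hdet
  obtain ⟨C, hC, hbound⟩ := hcov.exists_pos_eventually_le₃ hinv hratio
  obtain ⟨t₀, ht₀⟩ := eventually_atTop.1 (hbound.and hunit)
  refine ⟨C, hC, q, hq, max t₀ 1, by positivity, fun T hT => ?_⟩
  obtain ⟨⟨h₁, h₂, h₃⟩, hTunit⟩ := ht₀ T (le_of_max_le_left hT)
  simp only [frobenius_norm_eq_sqrt, Matrix.sub_apply, Real.norm_of_nonneg (Real.exp_pos _).le,
    div_self hdet, Real.sqrt_one, Real.norm_eq_abs, abs_sub_comm _ (1 : ℝ)] at h₁ h₂ h₃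
  exact ⟨h₁, ⟨hTunit.isUnit, hdet.isUnit⟩, h₂, h₃⟩

/-- Quantitative exponential convergence `C_T → C₀` from Section 5.3.2:
Frobenius-norm bounds for `C_T - C₀` and `C_T⁻¹ - C₀⁻¹`, invertibility, and
convergence of the ratio of determinants. -/
theorem covariance_convergence_estimates (d n : ℕ) (hd : 0 < d) (hdn : d ≤ n)
    (lam : Fin d → ℝ) (hpos : ∀ i, 0 < lam i)
    (σ : Matrix (Fin d) (Fin n) ℝ) (hrank : σ.rank = d) :
    ∃ C > 0, ∃ q > 0, ∃ t₀ > 0, ∀ T : ℝ, t₀ ≤ T →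
      (Real.sqrt (∑ j, ∑ k, (covT lam σ T j k - covInf lam σ j k) ^ 2) ≤
          C * Real.exp (-q * T)) ∧
      (IsUnit (covT lam σ T).det ∧ IsUnit (covInf lam σ).det) ∧
      (Real.sqrt (∑ j, ∑ k, ((covT lam σ T)⁻¹ j k - (covInf lam σ)⁻¹ j k) ^ 2) ≤
          C * Real.exp (-q * T)) ∧
      |1 - Real.sqrt ((covT lam σ T).det / (covInf lam σ).det)| ≤
          C * Real.exp (-q * T) :=
  covariance_convergence_estimates_general d n lam hpos σ hrank
end
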